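/- Let k, uxx, uxy, uyy, uxv, uyu, uuu, uuv, uvv be real numbers (where uxx, uxy, uyy stand for the second partials U_{xx}, U_{xy}, U_{yy}, uxv for U_{x ẏ}, uyu for U_{y ẋ}, and uuu, uuv, uvv for U_{ẋẋ}, U_{ẋẏ}, U_{ẏẏ} at an equilibrium point), and set d = 1 + uuu + uvv + uuu·uvv − uuv². Assume d ≠ 0 and let A, B, C, D, E, F, G, H be real numbers satisfying: A(1+uuu) + B·uuv = uxx; B(1+uvv) + A·uuv = uxy; C(1+uuu) + D·uuv = uxy; D(1+uvv) + C·uuv = uyy; E(1+uuu) + F·uuv = 0; F(1+uvv) + E·uuv = uyu − uxv − 2k; G(1+uuu) + H·uuv = uxv − uyu + 2k; H(1+uvv) + G·uuv = 0. Then the characteristic polynomial of the 4×4 real matrix M with rows (0,1,0,0), (A,E,C,G), (0,0,0,1), (B,F,D,H) equals λ⁴ + a1λ² + a2, where a2·d = uyy·uxx − uxy² and a1·d = −4k·uyu + 4k·uxv + uyu² + uxv² − uyy − uyy·uuu − 2·uyu·uxv + 2·uuv·uxy − uvv·uxx − uxx + 4k². -/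
import Mathlib


open Polynomial

/-- **Algebraic core of the characteristic polynomial theorem.**
Given the second partials of the potential `U` at an equilibrium point and the
determinant `d = 1 + U_{ẋẋ} + U_{ẏẏ} + U_{ẋẋ}U_{ẏẏ} − U_{ẋẏ}² ≠ 0`, if
`A, B, C, D, E, F, G, H` solve the eight linear equations obtained by implicit
differentiation of the reduced first-order vector field, then the characteristic
polynomial of the Jacobian matrix `M` with rows `(0,1,0,0), (A,E,C,G), (0,0,0,1),
(B,F,D,H)` is `λ⁴ + a1λ² + a2`, where
`a2·d = U_{yy}U_{xx} − U_{xy}²` and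
`a1·d = −4kU_{yẋ} + 4kU_{xẏ} + U_{yẋ}² + U_{xẏ}² − U_{yy} − U_{yy}U_{ẋẋ}
        − 2U_{yẋ}U_{xẏ} + 2U_{ẋẏ}U_{xy} − U_{ẏẏ}U_{xx} − U_{xx} + 4k²`. -/
theorem charpoly_of_equilibrium_jacobian
    (k uxx uxy uyy uxv uyu uuu uuv uvv : ℝ)
    (d : ℝ) (hd : d = 1 + uuu + uvv + uuu * uvv - uuv ^ 2) (hdne : d ≠ 0)
    (A B C D E F G H : ℝ)
    (hA : A * (1 + uuu) + B * uuv = uxx)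
    (hB : B * (1 + uvv) + A * uuv = uxy)
    (hC : C * (1 + uuu) + D * uuv = uxy)
    (hD : D * (1 + uvv) + C * uuv = uyy)
    (hE : E * (1 + uuu) + F * uuv = 0)
    (hF : F * (1 + uvv) + E * uuv = uyu - uxv - 2 * k)
    (hG : G * (1 + uuu) + H * uuv = uxv - uyu + 2 * k)
    (hH : H * (1 + uvv) + G * uuv = 0)
    (a1 a2 : ℝ)
    (ha2 : a2 * d = uyy * uxx - uxy ^ 2)
    (ha1 : a1 * d = -4 * k * uyu + 4 * k * uxv + uyu ^ 2 + uxv ^ 2 - uyy - uyy * uuu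
      - 2 * uyu * uxv + 2 * uuv * uxy - uvv * uxx - uxx + 4 * k ^ 2)
    (M : Matrix (Fin 4) (Fin 4) ℝ)
    (hM : M = !![0, 1, 0, 0; A, E, C, G; 0, 0, 0, 1; B, F, D, H]) :
    M.charpoly = X ^ 4 + Polynomial.C a1 * X ^ 2 + Polynomial.C a2 := by
  -- explicit solutions times d
  have hA' : A * d = uxx * (1 + uvv) - uxy * uuv := by
    linear_combination (1 + uvv) * hA - uuv * hB + A * hd
  have hB' : B * d = uxy * (1 + uuu) - uxx * uuv := by
    linear_combination (1 + uuu) * hB - uuv * hA + B * hd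
  have hC' : C * d = uxy * (1 + uvv) - uyy * uuv := by
    linear_combination (1 + uvv) * hC - uuv * hD + C * hd
  have hD' : D * d = uyy * (1 + uuu) - uxy * uuv := by
    linear_combination (1 + uuu) * hD - uuv * hC + D * hd
  have hE' : E * d = -(uyu - uxv - 2 * k) * uuv := by
    linear_combination (1 + uvv) * hE - uuv * hF + E * hd
  have hF' : F * d = (uyu - uxv - 2 * k) * (1 + uuu) := by
    linear_combination (1 + uuu) * hF - uuv * hE + F * hd
  have hG' : G * d = -(uyu - uxv - 2 * k) * (1 + uvv) := by
    linear_combination (1 + uvv) * hG - uuv * hH + G * hd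
  have hH' : H * d = (uyu - uxv - 2 * k) * uuv := by
    linear_combination (1 + uuu) * hH - uuv * hG + H * hd
  have h3 : E + H = 0 := by
    have : (E + H) * d = 0 * d := by linear_combination hE' + hH'
    exact mul_right_cancel₀ hdne this
  have h2 : E * H - A - D - F * G = a1 := by
    have h : (E * H - A - D - F * G) * d ^ 2 = a1 * d ^ 2 := by
      linear_combination (H * d) * hE' + (-(uyu - uxv - 2 * k) * uuv) * hH'
        - (G * d) * hF' - ((uyu - uxv - 2 * k) * (1 + uuu)) * hG'
        - d * hA' - d * hD' - d * ha1 - (uyu - uxv - 2 * k) ^ 2 * hd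
    exact mul_right_cancel₀ (pow_ne_zero 2 hdne) h
  have h1 : D * E + A * H - C * F - B * G = 0 := by
    have h : (D * E + A * H - C * F - B * G) * d ^ 2 = 0 * d ^ 2 := by
      linear_combination (E * d) * hD' + ((uyu - uxv - 2 * k) * uuv) * hA'
        + (A * d) * hH' + (uyy * (1 + uuu) - uxy * uuv) * hE'
        - (F * d) * hC' - (uxy * (1 + uvv) - uyy * uuv) * hF'
        - (G * d) * hB' - (uxy * (1 + uuu) - uxx * uuv) * hG'
    exact mul_right_cancel₀ (pow_ne_zero 2 hdne) h
  have h0 : A * D - B * C = a2 := by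
    have h : (A * D - B * C) * d ^ 2 = a2 * d ^ 2 := by
      linear_combination (D * d) * hA' + (uxx * (1 + uvv) - uxy * uuv) * hD'
        - (C * d) * hB' - (uxy * (1 + uuu) - uxx * uuv) * hC'
        - d * ha2 - (uyy * uxx - uxy ^ 2) * hd
    exact mul_right_cancel₀ (pow_ne_zero 2 hdne) h
  subst hM
  rw [Matrix.charpoly]
  have e1 : (Fin.succ 2 : Fin 4) = 3 := rfl
  have e2 : (Fin.castSucc 2 : Fin 4) = 2 := rfl
  have e3 : (Fin.succAbove 1 2 : Fin 4) = 3 := rfl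
  simp [Matrix.det_succ_row_zero, Fin.sum_univ_succ, Matrix.charmatrix_apply_eq,
    Matrix.charmatrix_apply_ne, Fin.succ_ne_zero, e1, e2, e3]
  have l3 : Polynomial.C E + Polynomial.C H = (0 : ℝ[X]) := by
    rw [← Polynomial.C_add, h3, Polynomial.C_0]
  have l2 : Polynomial.C E * Polynomial.C H - Polynomial.C A - Polynomial.C D
      - Polynomial.C F * Polynomial.C G = Polynomial.C a1 := by
    rw [← Polynomial.C_mul, ← Polynomial.C_mul, ← Polynomial.C_sub, ← Polynomial.C_sub,
      ← Polynomial.C_sub, h2]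
  have l1 : Polynomial.C D * Polynomial.C E + Polynomial.C A * Polynomial.C H
      - Polynomial.C C * Polynomial.C F - Polynomial.C B * Polynomial.C G = (0 : ℝ[X]) := by
    rw [← Polynomial.C_mul, ← Polynomial.C_mul, ← Polynomial.C_mul, ← Polynomial.C_mul,
      ← Polynomial.C_add, ← Polynomial.C_sub, ← Polynomial.C_sub, h1, Polynomial.C_0]
  have l0 : Polynomial.C A * Polynomial.C D - Polynomial.C B * Polynomial.C C
      = Polynomial.C a2 := by
    rw [← Polynomial.C_mul, ← Polynomial.C_mul, ← Polynomial.C_sub, h0]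
  linear_combination (-(X : ℝ[X]) ^ 3) * l3 + (X : ℝ[X]) ^ 2 * l2 + (X : ℝ[X]) * l1 + l0
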